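/- arXiv:2306.11140 — 3 statements merged into one kernel-verified Lean document; each statement's English description precedes it below -/
import Mathlib

section
/- If a poset P has finite covers (every element covers and is covered by only finitely many elements), then P is finitary (every principal order ideal is finite) if and only if P has no infinite descending chain and no bounded infinite ascending chain. -/
/-!
Without infinite descending chains we may argue by well-founded induction. Without bounded
infinite ascending chains, every `s < r` lies below a lower cover of `r`, namely a maximal
element of `[s, r)`. Hence `Iic r` is `{r}` together with the ideals `Iic t` of the finitely
many lower covers `t ⋖ r`, each finite by induction.
-/

section

variable {α : Type*}

theorem wellFoundedLT_of_not_exists_strictAnti [Preorder α] (h : ¬∃ f : ℕ → α, StrictAnti f) :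
    WellFoundedLT α :=
  Set.isWF_univ_iff.1 <| Set.isWF_iff_no_descending_seq.2 fun f hf _ ↦ h ⟨f, hf⟩

theorem isStronglyCoatomic_of_not_exists_bounded_strictMono [Preorder α]
    (h : ¬∃ (f : ℕ → α) (b : α), StrictMono f ∧ ∀ n, f n < b) : IsStronglyCoatomic α where
  exists_le_covBy_of_lt a b hab := by
    have hwf : (Set.Ico a b).WellFoundedOn (· > ·) :=
      Set.wellFoundedOn_iff_no_descending_seq.2 fun f hf ↦
        h ⟨f, b, fun _ _ hmn ↦ f.map_rel_iff.2 hmn, fun n ↦ (hf n).2⟩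
    obtain ⟨x, ⟨hax, hxb⟩, hmax⟩ := hwf.exists_maximal ⟨a, le_rfl, hab⟩
    exact ⟨x, hax, hxb, fun c hxc hcb ↦ hxc.not_ge (hmax ⟨hax.trans hxc.le, hcb⟩ hxc.le)⟩

theorem finite_Iic_of_finite_lowerCovers [PartialOrder α] [WellFoundedLT α]
    [IsStronglyCoatomic α] (hcov : ∀ a : α, {x | x ⋖ a}.Finite) (a : α) :
    (Set.Iic a).Finite := by
  induction a using WellFoundedLT.induction with
  | _ a ih =>
    by_contra h
    obtain ⟨b, hba, hb⟩ := exists_covby_infinite_Iic_of_infinite_Iic h (hcov a)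
    exact hb (ih b hba.lt)

end

/-- A poset with finite covers is finitary iff it has no infinite descending
chain and no bounded infinite ascending chain. -/
theorem stmt0 {P : Type*} [PartialOrder P]
    (hcov : ∀ p : P, {q : P | q ⋖ p}.Finite ∧ {q : P | p ⋖ q}.Finite) :
    (∀ p : P, {q : P | q ≤ p}.Finite) ↔
      ((¬ ∃ f : ℕ → P, StrictAnti f) ∧
        ¬ ∃ (f : ℕ → P) (q : P), StrictMono f ∧ ∀ n, f n < q) := by
  refine ⟨fun hfin ↦ ⟨?_, ?_⟩, fun ⟨hdesc, hasc⟩ ↦ ?_⟩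
  · rintro ⟨f, hf⟩
    exact (hfin (f 0)).not_infinite <|
      Set.infinite_of_injective_forall_mem hf.injective fun n ↦ hf.antitone n.zero_le
  · rintro ⟨f, q, hf, hq⟩
    exact (hfin q).not_infinite <|
      Set.infinite_of_injective_forall_mem hf.injective fun n ↦ (hq n).le
  · have := wellFoundedLT_of_not_exists_strictAnti hdesc
    have := isStronglyCoatomic_of_not_exists_bounded_strictMono hasc
    exact finite_Iic_of_finite_lowerCovers (fun p ↦ (hcov p).1)
end

section
/- The lattice of shifted Young diagrams with the weight function w(p) = 1 for diagonal cells and w(p) = 2 for off-diagonal cells satisfies the weighted differential condition with r = 1: for every strict partition λ, the sum of w over addable cells exceeds the sum of w over removable cells by exactly 1. -/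
/-- `D` is (the cell set of) a shifted Young diagram: a finite order ideal of the
octant `{(i,j) : 1 ≤ i ≤ j}` with the componentwise order. -/
def OctIdeal (D : Set (ℕ × ℕ)) : Prop :=
  D.Finite ∧ (∀ p ∈ D, 1 ≤ p.1 ∧ p.1 ≤ p.2) ∧
    ∀ p ∈ D, ∀ q : ℕ × ℕ, 1 ≤ q.1 → q.1 ≤ q.2 → q.1 ≤ p.1 → q.2 ≤ p.2 → q ∈ D

/-- The weight: 1 on diagonal cells, 2 off the diagonal. -/
def shiftedWt (p : ℕ × ℕ) : ℕ := if p.1 = p.2 then 1 else 2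


/-!
Describe a shifted diagram by its row lengths `λ₁ > ⋯ > λ_K > 0 = λ_{K+1}`. Row `i` has an
addable cell, at its end, iff `i = 1` or `λ_{i-1} ≥ λ_i + 2`, and a removable cell, its last one,
iff `λ_i = 1` or `λ_i ≥ λ_{i+1} + 2`. For `i < K` the removable cell of row `i` and the addable
cell of row `i + 1` therefore occur together, both off the diagonal; the removable cell of row
`K` always exists and weighs exactly one more than the (diagonal) addable cell of row `K + 1`;
and the addable cell ending row `1` has weight `2`. Summing, the addable weight exceeds the
removable weight by `2 - 1 = 1` (and the empty diagram has just the addable cell `(1, 1)`).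
-/

open Finset

open Classical in
/-- Row `i` of a shifted diagram occupies the columns `i, …, i + rowLen D i - 1`. -/
noncomputable def rowLen (D : Set (ℕ × ℕ)) (i : ℕ) : ℕ :=
  if (i, i) ∈ D then sSup {j | (i, j) ∈ D} + 1 - i else 0

noncomputable def numRows (D : Set (ℕ × ℕ)) : ℕ := sSup {i | (i, i) ∈ D}

def IsAddableRow (D : Set (ℕ × ℕ)) (i : ℕ) : Prop :=
  i = 1 ∨ rowLen D i + 2 ≤ rowLen D (i - 1)

def IsRemovableRow (D : Set (ℕ × ℕ)) (i : ℕ) : Prop :=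
  0 < rowLen D i ∧ (rowLen D i = 1 ∨ rowLen D (i + 1) + 2 ≤ rowLen D i)

open Classical in
noncomputable def addableWt (D : Set (ℕ × ℕ)) (i : ℕ) : ℕ :=
  if IsAddableRow D i then shiftedWt (i, i + rowLen D i) else 0

open Classical in
noncomputable def removableWt (D : Set (ℕ × ℕ)) (i : ℕ) : ℕ :=
  if IsRemovableRow D i then shiftedWt (i, i + rowLen D i - 1) else 0

lemma shiftedWt_diag (i : ℕ) : shiftedWt (i, i) = 1 := if_pos rfl

lemma shiftedWt_of_lt {i j : ℕ} (h : i < j) : shiftedWt (i, j) = 2 := if_neg h.ne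

lemma finsum_mem_graph_eq_sum_range {M : Type*} [AddCommMonoid M] (P : ℕ → Prop)
    [DecidablePred P] (f : ℕ → ℕ) (g : ℕ × ℕ → M) {n : ℕ} (hP : ∀ i, P i → 1 ≤ i ∧ i ≤ n) :
    ∑ᶠ q ∈ {q | ∃ i, P i ∧ q = (i, f i)}, g q =
      ∑ i ∈ range n, if P (i + 1) then g (i + 1, f (i + 1)) else 0 := by
  have hset : {q | ∃ i, P i ∧ q = (i, f i)} =
      (fun i => (i + 1, f (i + 1))) '' ↑((range n).filter fun i => P (i + 1)) := by
    ext q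
    simp only [Set.mem_image, coe_filter, mem_range]
    constructor
    · rintro ⟨i, hi, rfl⟩
      obtain ⟨h1, h2⟩ := hP i hi
      refine ⟨i - 1, ⟨by omega, ?_⟩, ?_⟩ <;> rw [Nat.sub_add_cancel h1]
      exact hi
    · rintro ⟨i, ⟨-, hi⟩, rfl⟩
      exact ⟨i + 1, hi, rfl⟩
  have hinj : Set.InjOn (fun i => (i + 1, f (i + 1))) ↑((range n).filter fun i => P (i + 1)) :=
    fun a _ b _ h => by simpa using congrArg Prod.fst h
  rw [hset, finsum_mem_image hinj, finsum_mem_coe_finset, sum_filter]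

namespace OctIdeal

variable {D : Set (ℕ × ℕ)} (hD : OctIdeal D)
include hD

lemma mem_of_le {a b c d : ℕ} (h : (a, b) ∈ D) (hc : 1 ≤ c) (hcd : c ≤ d) (hca : c ≤ a)
    (hdb : d ≤ b) : (c, d) ∈ D :=
  hD.2.2 _ h (c, d) hc hcd hca hdb

lemma diag_mem {i j : ℕ} (h : (i, j) ∈ D) : (i, i) ∈ D :=
  hD.mem_of_le h (hD.2.1 _ h).1 le_rfl le_rfl (hD.2.1 _ h).2

lemma bddAbove_row (i : ℕ) : BddAbove {j | (i, j) ∈ D} :=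
  (hD.1.image Prod.snd).bddAbove.mono fun j hj => show j ∈ Prod.snd '' D from ⟨(i, j), hj, rfl⟩

lemma bddAbove_diag : BddAbove {i | (i, i) ∈ D} :=
  (hD.1.image Prod.fst).bddAbove.mono fun i hi => show i ∈ Prod.fst '' D from ⟨(i, i), hi, rfl⟩

lemma mem_iff_rowLen (i j : ℕ) : (i, j) ∈ D ↔ 1 ≤ i ∧ i ≤ j ∧ j < i + rowLen D i := by
  by_cases hd : (i, i) ∈ D
  · have hb := hD.bddAbove_row i
    have hlast : (i, sSup {j | (i, j) ∈ D}) ∈ D := Nat.sSup_mem ⟨i, hd⟩ hb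
    have hi : i ≤ sSup {j | (i, j) ∈ D} := le_csSup hb hd
    rw [rowLen, if_pos hd]
    constructor
    · intro h
      have := le_csSup hb h
      have := hD.2.1 _ h
      omega
    · rintro ⟨h1, h2, h3⟩
      exact hD.mem_of_le hlast h1 h2 le_rfl (by omega)
  · rw [rowLen, if_neg hd]
    exact ⟨fun h => absurd (hD.diag_mem h) hd, fun h => by omega⟩

lemma diag_mem_iff_le_numRows (i : ℕ) : (i, i) ∈ D ↔ 1 ≤ i ∧ i ≤ numRows D := by
  constructor
  · exact fun h => ⟨(hD.2.1 _ h).1, le_csSup hD.bddAbove_diag h⟩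
  · rintro ⟨h1, h2⟩
    have hne : {k | (k, k) ∈ D}.Nonempty := by
      by_contra h
      rw [Set.not_nonempty_iff_eq_empty] at h
      simp only [numRows, h, csSup_empty, bot_eq_zero'] at h2
      omega
    have hK : (numRows D, numRows D) ∈ D := Nat.sSup_mem hne hD.bddAbove_diag
    exact hD.mem_of_le hK h1 le_rfl h2 h2

lemma rowLen_pos_iff (i : ℕ) : 0 < rowLen D i ↔ 1 ≤ i ∧ i ≤ numRows D := by
  rw [← hD.diag_mem_iff_le_numRows]
  by_cases hd : (i, i) ∈ D
  · simpa [hd] using ((hD.mem_iff_rowLen i i).1 hd).2.2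
  · simp [rowLen, hd]

lemma rowLen_succ_lt {i : ℕ} (hi : 1 ≤ i) (h : 0 < rowLen D (i + 1)) :
    rowLen D (i + 1) < rowLen D i := by
  have hlast : (i + 1, i + rowLen D (i + 1)) ∈ D :=
    (hD.mem_iff_rowLen _ _).2 ⟨by omega, by omega, by omega⟩
  have := (hD.mem_iff_rowLen _ _).1
    (hD.mem_of_le hlast hi (by omega) (by omega) le_rfl)
  omega

lemma insert_iff (q : ℕ × ℕ) : OctIdeal (insert q D) ↔ (1 ≤ q.1 ∧ q.1 ≤ q.2) ∧
    ∀ p : ℕ × ℕ, 1 ≤ p.1 → p.1 ≤ p.2 → p.1 ≤ q.1 → p.2 ≤ q.2 → p ≠ q → p ∈ D := by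
  constructor
  · rintro ⟨-, hoct, hdown⟩
    refine ⟨hoct q (Set.mem_insert _ _), fun p h1 h2 h3 h4 hne => ?_⟩
    exact (hdown q (Set.mem_insert _ _) p h1 h2 h3 h4).resolve_left hne
  · rintro ⟨hq, hbelow⟩
    refine ⟨hD.1.insert q, ?_, ?_⟩
    · rintro p (rfl | hp)
      exacts [hq, hD.2.1 p hp]
    · rintro r (rfl | hr) p h1 h2 h3 h4
      · by_cases hpr : p = r
        · exact Or.inl hpr
        · exact Or.inr (hbelow p h1 h2 h3 h4 hpr)
      · exact Or.inr (hD.2.2 r hr p h1 h2 h3 h4)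

lemma diff_singleton_iff {p : ℕ × ℕ} (hp : p ∈ D) :
    OctIdeal (D \ {p}) ↔ ∀ q ∈ D, p.1 ≤ q.1 → p.2 ≤ q.2 → q = p := by
  constructor
  · rintro ⟨-, -, hdown⟩ q hq h1 h2
    by_contra hne
    exact (hdown q ⟨hq, hne⟩ p (hD.2.1 p hp).1 (hD.2.1 p hp).2 h1 h2).2 rfl
  · intro hmax
    refine ⟨hD.1.sdiff, fun r hr => hD.2.1 r hr.1, ?_⟩
    rintro r ⟨hr, hrp⟩ q h1 h2 h3 h4
    refine ⟨hD.2.2 r hr q h1 h2 h3 h4, fun hqp => hrp ?_⟩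
    rw [Set.mem_singleton_iff] at hqp ⊢
    subst hqp
    exact hmax r hr h3 h4

lemma isAddableRow_bounds {i : ℕ} (h : IsAddableRow D i) : 1 ≤ i ∧ i ≤ numRows D + 1 := by
  rcases h with rfl | h
  · omega
  · have := (hD.rowLen_pos_iff (i - 1)).1 (by omega)
    omega

lemma isRemovableRow_bounds {i : ℕ} (h : IsRemovableRow D i) : 1 ≤ i ∧ i ≤ numRows D :=
  (hD.rowLen_pos_iff i).1 h.1

lemma addable_iff (q : ℕ × ℕ) :
    (q ∉ D ∧ OctIdeal (insert q D)) ↔ ∃ i, IsAddableRow D i ∧ q = (i, i + rowLen D i) := by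
  rw [hD.insert_iff]
  constructor
  · obtain ⟨x, y⟩ := q
    rintro ⟨hq, ⟨hx, hxy⟩, hbelow⟩
    dsimp only at hx hxy hbelow
    have hend : x + rowLen D x ≤ y := by
      by_contra h
      exact hq ((hD.mem_iff_rowLen x y).2 ⟨hx, hxy, by omega⟩)
    have hy : y = x + rowLen D x := by
      by_contra h
      have := (hD.mem_iff_rowLen _ _).1
        (hbelow (x, x + rowLen D x) hx (by simp) le_rfl hend (by simp; omega))
      omega
    subst hy
    refine ⟨x, ?_, rfl⟩
    rcases Nat.lt_or_ge x 2 with hx1 | hx2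
    · left
      omega
    · right
      have := (hD.mem_iff_rowLen _ _).1
        (hbelow (x - 1, x + rowLen D x) (by simp; omega) (by simp; omega) (by simp) le_rfl
          (by simp; omega))
      omega
  · rintro ⟨i, hi, rfl⟩
    have hi1 := (hD.isAddableRow_bounds hi).1
    refine ⟨fun h => ?_, ⟨hi1, by simp⟩, ?_⟩
    · have := (hD.mem_iff_rowLen _ _).1 h
      omega
    rintro ⟨a, b⟩ h1 h2 h3 h4 hne
    dsimp only at h1 h2 h3 h4
    rcases h3.eq_or_lt with rfl | hlt
    · have hb : b ≠ a + rowLen D a := fun h => hne (by rw [h])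
      exact (hD.mem_iff_rowLen a b).2 ⟨h1, h2, by omega⟩
    · -- row `i - 1` reaches past column `i + rowLen D i`, and `(a, b)` lies below that cell
      have hrow : rowLen D i + 2 ≤ rowLen D (i - 1) := hi.resolve_left (by omega)
      have hcorner : (i - 1, i + rowLen D i) ∈ D :=
        (hD.mem_iff_rowLen _ _).2 ⟨by omega, by omega, by omega⟩
      exact hD.mem_of_le hcorner h1 h2 (by omega) h4

lemma removable_iff (p : ℕ × ℕ) :
    (p ∈ D ∧ OctIdeal (D \ {p})) ↔ ∃ i, IsRemovableRow D i ∧ p = (i, i + rowLen D i - 1) := by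
  constructor
  · rintro ⟨hp, hI⟩
    have hmax := (hD.diff_singleton_iff hp).1 hI
    obtain ⟨x, y⟩ := p
    obtain ⟨hx, hxy, hy⟩ := (hD.mem_iff_rowLen x y).1 hp
    have hyx : y = x + rowLen D x - 1 := by
      by_contra h
      have := hmax (x, y + 1) ((hD.mem_iff_rowLen _ _).2 ⟨hx, by omega, by omega⟩) le_rfl (by simp)
      simp at this
    subst hyx
    refine ⟨x, ⟨by omega, ?_⟩, rfl⟩
    by_contra h
    have := hmax (x + 1, x + rowLen D x - 1)
      ((hD.mem_iff_rowLen _ _).2 ⟨by omega, by omega, by omega⟩) (by simp) le_rfl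
    simp at this
  · rintro ⟨i, ⟨hpos, hrow⟩, rfl⟩
    have hi := ((hD.rowLen_pos_iff i).1 hpos).1
    have hp : (i, i + rowLen D i - 1) ∈ D := (hD.mem_iff_rowLen _ _).2 ⟨hi, by omega, by omega⟩
    refine ⟨hp, (hD.diff_singleton_iff hp).2 ?_⟩
    rintro ⟨a, b⟩ hab h1 h2
    dsimp only at h1 h2
    obtain ⟨ha, hab', hb⟩ := (hD.mem_iff_rowLen a b).1 hab
    rcases h1.eq_or_lt with rfl | hlt
    · exact Prod.ext rfl (by dsimp only; omega)
    · -- row `i + 1` would reach column `b ≥ i + rowLen D i - 1`, which `hrow` forbids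
      have := (hD.mem_iff_rowLen (i + 1) b).1 (hD.mem_of_le hab (by omega) (by omega) hlt le_rfl)
      have := hD.rowLen_succ_lt hi (by omega)
      omega

lemma finsum_addable_eq_sum :
    ∑ᶠ q ∈ {q : ℕ × ℕ | q ∉ D ∧ OctIdeal (insert q D)}, shiftedWt q =
      ∑ i ∈ range (numRows D + 1), addableWt D (i + 1) := by
  classical
  rw [Set.ext hD.addable_iff]
  exact finsum_mem_graph_eq_sum_range _ _ _ fun i hi => hD.isAddableRow_bounds hi

lemma finsum_removable_eq_sum :
    ∑ᶠ p ∈ {p : ℕ × ℕ | p ∈ D ∧ OctIdeal (D \ {p})}, shiftedWt p =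
      ∑ i ∈ range (numRows D), removableWt D (i + 1) := by
  classical
  rw [Set.ext hD.removable_iff]
  exact finsum_mem_graph_eq_sum_range _ _ _ fun i hi => hD.isRemovableRow_bounds hi

lemma addableWt_one_of_numRows_eq_zero (h : numRows D = 0) : addableWt D 1 = 1 := by
  have : rowLen D 1 = 0 := by
    have := hD.rowLen_pos_iff 1
    omega
  simp [addableWt, IsAddableRow, shiftedWt, this]

lemma addableWt_one (h : 0 < numRows D) : addableWt D 1 = 2 := by
  have := (hD.rowLen_pos_iff 1).2 ⟨le_rfl, h⟩
  rw [addableWt, if_pos (show IsAddableRow D 1 from Or.inl rfl), shiftedWt_of_lt (by omega)]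

lemma removableWt_eq_addableWt_succ {i : ℕ} (h1 : 1 ≤ i) (h2 : i < numRows D) :
    removableWt D i = addableWt D (i + 1) := by
  have hpos := (hD.rowLen_pos_iff (i + 1)).2 ⟨by omega, h2⟩
  have hlt := hD.rowLen_succ_lt h1 hpos
  have hrow : IsRemovableRow D i ↔ IsAddableRow D (i + 1) := by
    simp only [IsRemovableRow, IsAddableRow, Nat.add_sub_cancel]
    omega
  have hwt : shiftedWt (i, i + rowLen D i - 1) = shiftedWt (i + 1, i + 1 + rowLen D (i + 1)) := by
    rw [shiftedWt_of_lt (by omega), shiftedWt_of_lt (by omega)]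
  rw [removableWt, addableWt, hwt]
  classical
  exact if_congr hrow rfl rfl

lemma removableWt_numRows (h : 0 < numRows D) :
    removableWt D (numRows D) = addableWt D (numRows D + 1) + 1 := by
  have hpos := (hD.rowLen_pos_iff (numRows D)).2 ⟨h, le_rfl⟩
  have hzero : rowLen D (numRows D + 1) = 0 := by
    have := hD.rowLen_pos_iff (numRows D + 1)
    omega
  have hrem : IsRemovableRow D (numRows D) := ⟨hpos, by omega⟩
  rw [removableWt, if_pos hrem, addableWt]
  by_cases h1 : rowLen D (numRows D) = 1
  · have hadd : ¬ IsAddableRow D (numRows D + 1) := by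
      simp only [IsAddableRow, Nat.add_sub_cancel]
      omega
    rw [if_neg hadd, h1, Nat.add_sub_cancel, shiftedWt_diag]
  · have hadd : IsAddableRow D (numRows D + 1) := Or.inr (by rw [hzero, Nat.add_sub_cancel]; omega)
    rw [if_pos hadd, hzero, add_zero, shiftedWt_diag, shiftedWt_of_lt (by omega)]

end OctIdeal

/-- The lattice of shifted Young diagrams with weight 1 on the diagonal and
2 off the diagonal satisfies the weighted differential condition with `r = 1`:
the weights of the addable cells sum to one more than the weights of the
removable cells. -/
theorem stmt10 (D : Set (ℕ × ℕ)) (hD : OctIdeal D) :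
    ∑ᶠ q ∈ {q : ℕ × ℕ | q ∉ D ∧ OctIdeal (insert q D)}, shiftedWt q =
      (∑ᶠ p ∈ {p : ℕ × ℕ | p ∈ D ∧ OctIdeal (D \ {p})}, shiftedWt p) + 1 := by
  rw [hD.finsum_addable_eq_sum, hD.finsum_removable_eq_sum]
  rcases Nat.eq_zero_or_pos (numRows D) with hK | hK
  · simp [hK, hD.addableWt_one_of_numRows_eq_zero hK]
  obtain ⟨k, hk⟩ : ∃ k, numRows D = k + 1 := ⟨numRows D - 1, by omega⟩
  have hlast := hD.removableWt_numRows hK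
  have hmid : ∀ i ∈ range k, removableWt D (i + 1) = addableWt D (i + 1 + 1) :=
    fun i hi => hD.removableWt_eq_addableWt_succ (by omega) (by rw [mem_range] at hi; omega)
  rw [hk] at hlast ⊢
  rw [sum_range_succ' (fun i => addableWt D (i + 1)), sum_range_succ,
    sum_range_succ (fun i => removableWt D (i + 1)), sum_congr rfl hmid, hlast,
    hD.addableWt_one hK]
  ring
end

section
/- For a nonempty strict partition λ with shifted diagram D: if the last part of λ equals 1, then the number of addable cells of D equals the number of removable cells of D, and the unique removable diagonal cell contributes weight 1 while all other removable and all addable cells are off-diagonal; if the last part of λ is greater than 1 (or λ is empty), the number of addable cells equals the number of removable cells plus 1, and exactly one addable cell is diagonal. -/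
def removableCells (D : Set (ℕ × ℕ)) : Set (ℕ × ℕ) := {p | p ∈ D ∧ OctIdeal (D \ {p})}

def addableCells (D : Set (ℕ × ℕ)) : Set (ℕ × ℕ) := {q | q ∉ D ∧ OctIdeal (insert q D)}

namespace OctIdeal

variable {D : Set (ℕ × ℕ)}

theorem mem_removableCells_iff (hD : OctIdeal D) {p : ℕ × ℕ} :
    p ∈ removableCells D ↔ p ∈ D ∧ ∀ q ∈ D, p ≤ q → q = p := by
  obtain ⟨hfin, hoct, hlower⟩ := hD
  constructor
  · rintro ⟨hp, -, -, hlower'⟩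
    refine ⟨hp, fun q hq hpq => ?_⟩
    by_contra hne
    exact (hlower' q ⟨hq, hne⟩ p (hoct p hp).1 (hoct p hp).2 hpq.1 hpq.2).2 rfl
  · rintro ⟨hp, hmax⟩
    refine ⟨hp, hfin.sdiff, fun q hq => hoct q hq.1, fun q hq r hr1 hr2 hrq1 hrq2 => ?_⟩
    refine ⟨hlower q hq.1 r hr1 hr2 hrq1 hrq2, fun hrp => hq.2 ?_⟩
    rw [Set.mem_singleton_iff] at hrp ⊢
    subst hrp
    exact hmax q hq.1 ⟨hrq1, hrq2⟩

theorem mem_addableCells_iff (hD : OctIdeal D) {q : ℕ × ℕ} :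
    q ∈ addableCells D ↔
      q ∉ D ∧ 1 ≤ q.1 ∧ q.1 ≤ q.2 ∧ ∀ r : ℕ × ℕ, 1 ≤ r.1 → r.1 ≤ r.2 → r < q → r ∈ D := by
  obtain ⟨hfin, hoct, hlower⟩ := hD
  constructor
  · rintro ⟨hq, -, hoct', hlower'⟩
    obtain ⟨hq1, hq2⟩ := hoct' q (Set.mem_insert _ _)
    refine ⟨hq, hq1, hq2, fun r hr1 hr2 hrq => ?_⟩
    rcases hlower' q (Set.mem_insert _ _) r hr1 hr2 hrq.le.1 hrq.le.2 with rfl | hr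
    · exact absurd hrq (lt_irrefl _)
    · exact hr
  · rintro ⟨hq, hq1, hq2, hbelow⟩
    refine ⟨hq, hfin.insert q, ?_, ?_⟩
    · rintro p (rfl | hp)
      exacts [⟨hq1, hq2⟩, hoct p hp]
    · rintro p (rfl | hp) r hr1 hr2 hrp1 hrp2
      · rcases eq_or_ne r p with rfl | hne
        · exact Set.mem_insert _ _
        · exact Set.mem_insert_of_mem _ (hbelow r hr1 hr2 (lt_of_le_of_ne ⟨hrp1, hrp2⟩ hne))
      · exact Set.mem_insert_of_mem _ (hlower p hp r hr1 hr2 hrp1 hrp2)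

end OctIdeal

def shiftedDiagram (k : ℕ) (l : ℕ → ℕ) : Set (ℕ × ℕ) :=
  {p | 1 ≤ p.1 ∧ p.1 ≤ k ∧ p.1 ≤ p.2 ∧ p.2 < p.1 + l p.1}

def cornerRows (k : ℕ) (l : ℕ → ℕ) : Finset ℕ :=
  (Finset.Icc 1 k).filter fun i => i = k ∨ l (i + 1) + 1 < l i

/-- `i ∈ extendableRows k l` records that row `i + 1` has an addable cell at its end. -/
def extendableRows (k : ℕ) (l : ℕ → ℕ) : Finset ℕ :=
  (Finset.range k).filter fun i => i = 0 ∨ l (i + 1) + 1 < l i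

theorem card_extendableRows (k : ℕ) (l : ℕ → ℕ) :
    (extendableRows k l).card = (cornerRows k l).card := by
  rcases Nat.eq_zero_or_pos k with rfl | hk
  · rfl
  set gaps := (Finset.Ico 1 k).filter fun i => l (i + 1) + 1 < l i
  have hcorner : cornerRows k l = insert k gaps := by
    ext i
    simp only [cornerRows, gaps, Finset.mem_filter, Finset.mem_Icc, Finset.mem_insert,
      Finset.mem_Ico]
    omega
  have hext : extendableRows k l = insert 0 gaps := by
    ext i
    simp only [extendableRows, gaps, Finset.mem_filter, Finset.mem_range, Finset.mem_insert,
      Finset.mem_Ico]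
    omega
  rw [hcorner, hext, Finset.card_insert_of_notMem (by simp [gaps]),
    Finset.card_insert_of_notMem (by simp [gaps])]

def cornerCells (k : ℕ) (l : ℕ → ℕ) : Finset (ℕ × ℕ) :=
  (cornerRows k l).image fun i => (i, i + l i - 1)

def extensionCells (k : ℕ) (l : ℕ → ℕ) : Finset (ℕ × ℕ) :=
  (extendableRows k l).image fun i => (i + 1, i + 1 + l (i + 1))

theorem card_extensionCells (k : ℕ) (l : ℕ → ℕ) :
    (extensionCells k l).card = (cornerCells k l).card := by
  rw [extensionCells, cornerCells,
    Finset.card_image_of_injective _ fun i j h => by simpa using congrArg Prod.fst h,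
    Finset.card_image_of_injective _ fun i j h => congrArg Prod.fst h, card_extendableRows]

section ShiftedDiagram

variable {k : ℕ} {l : ℕ → ℕ}

@[simp]
theorem mk_mem_shiftedDiagram {a b : ℕ} :
    (a, b) ∈ shiftedDiagram k l ↔ 1 ≤ a ∧ a ≤ k ∧ a ≤ b ∧ b < a + l a :=
  Iff.rfl

theorem antitoneOn_add_self (hstrict : ∀ i, 1 ≤ i → i < k → l (i + 1) < l i) :
    AntitoneOn (fun i => i + l i) (Set.Icc 1 k) :=
  antitoneOn_of_succ_le Set.ordConnected_Icc fun i _ hi hi' => by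
    simp only [Order.succ_eq_add_one, Set.mem_Icc] at hi hi' ⊢
    have := hstrict i hi.1 (by omega)
    omega

theorem octIdeal_shiftedDiagram (hstrict : ∀ i, 1 ≤ i → i < k → l (i + 1) < l i) :
    OctIdeal (shiftedDiagram k l) := by
  have hanti := antitoneOn_add_self hstrict
  refine ⟨?_, fun p hp => ⟨hp.1, hp.2.2.1⟩, ?_⟩
  · refine ((Set.finite_Icc 1 k).prod (Set.finite_Iio (1 + l 1))).subset ?_
    rintro ⟨a, b⟩ hab
    obtain ⟨ha1, hak, -, hb⟩ := mk_mem_shiftedDiagram.1 hab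
    have : a + l a ≤ 1 + l 1 := hanti ⟨le_rfl, by omega⟩ ⟨ha1, hak⟩ ha1
    simp only [Set.mem_prod, Set.mem_Icc, Set.mem_Iio]
    omega
  · rintro ⟨a, b⟩ hab ⟨c, d⟩ hc1 hcd hca hdb
    obtain ⟨ha1, hak, -, hb⟩ := mk_mem_shiftedDiagram.1 hab
    dsimp only at hc1 hcd hca hdb
    have : a + l a ≤ c + l c := hanti ⟨hc1, by omega⟩ ⟨ha1, hak⟩ hca
    simp only [mk_mem_shiftedDiagram]
    omega

theorem removableCells_shiftedDiagram (hpos : ∀ i, 1 ≤ i → i ≤ k → 0 < l i)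
    (hstrict : ∀ i, 1 ≤ i → i < k → l (i + 1) < l i) :
    removableCells (shiftedDiagram k l) = cornerCells k l := by
  have hanti := antitoneOn_add_self hstrict
  ext ⟨a, b⟩
  simp only [(octIdeal_shiftedDiagram hstrict).mem_removableCells_iff, Prod.forall,
    mk_mem_shiftedDiagram, Prod.mk_le_mk, Prod.mk.injEq, Finset.coe_image, Set.mem_image,
    Finset.mem_coe, cornerCells, cornerRows, Finset.mem_filter, Finset.mem_Icc]
  constructor
  · rintro ⟨⟨ha1, hak, hab, hb⟩, hmax⟩
    have hla := hpos a ha1 hak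
    have hb_last : b = a + l a - 1 := by
      by_contra hne
      have := hmax a (b + 1) ⟨ha1, hak, by omega, by omega⟩ ⟨le_rfl, by omega⟩
      omega
    refine ⟨a, ⟨⟨ha1, hak⟩, ?_⟩, rfl, hb_last.symm⟩
    by_contra! hcon
    have hlt := hstrict a ha1 (by omega)
    have hnext := hpos (a + 1) (by omega) (by omega)
    have := hmax (a + 1) b ⟨by omega, by omega, by omega, by omega⟩ ⟨by omega, le_rfl⟩
    omega
  · rintro ⟨i, ⟨⟨hi1, hik⟩, hcorner⟩, rfl, rfl⟩
    have hli := hpos i hi1 hik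
    refine ⟨⟨hi1, hik, by omega, by omega⟩, fun c d ⟨hc1, hck, hcd, hdc⟩ ⟨hic, hd⟩ => ?_⟩
    have hc : c = i := by
      by_contra hne
      have : c + l c ≤ (i + 1) + l (i + 1) := hanti ⟨by omega, by omega⟩ ⟨hc1, hck⟩ (by omega)
      omega
    subst hc
    omega

theorem existsUnique_diag_mem_removableCells (hpos : ∀ i, 1 ≤ i → i ≤ k → 0 < l i)
    (hstrict : ∀ i, 1 ≤ i → i < k → l (i + 1) < l i) (hlast : 1 ≤ k ∧ l k = 1) :
    ∃! p : ℕ × ℕ, p ∈ removableCells (shiftedDiagram k l) ∧ p.1 = p.2 := by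
  simp only [removableCells_shiftedDiagram hpos hstrict, cornerCells, cornerRows,
    Finset.coe_image, Set.mem_image, Finset.mem_coe, Finset.mem_filter, Finset.mem_Icc]
  refine ⟨(k, k), ⟨⟨k, ⟨⟨hlast.1, le_rfl⟩, Or.inl rfl⟩, by simp [hlast.2]⟩, rfl⟩, ?_⟩
  rintro p ⟨⟨i, ⟨⟨hi1, hik⟩, hcorner⟩, rfl⟩, hdiag⟩
  have := hpos i hi1 hik
  have hi : i = k := by
    by_contra hne
    have := hpos (i + 1) (by omega) (by omega)
    omega
  subst hi
  simp only [hlast.2, Nat.add_sub_cancel]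

theorem coe_extensionCells_subset_addableCells
    (hstrict : ∀ i, 1 ≤ i → i < k → l (i + 1) < l i) :
    ↑(extensionCells k l) ⊆ addableCells (shiftedDiagram k l) := by
  simp only [extensionCells, Finset.coe_image, Set.image_subset_iff]
  intro i hi
  obtain ⟨hik, hgap⟩ : i < k ∧ (i = 0 ∨ l (i + 1) + 1 < l i) := by
    simpa [extendableRows] using hi
  refine ((octIdeal_shiftedDiagram hstrict).mem_addableCells_iff).2
    ⟨by simp, by simp, by simp, fun ⟨c, d⟩ hc1 hcd hlt => ?_⟩
  simp only [Prod.lt_iff] at hc1 hcd hlt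
  rcases eq_or_lt_of_le (show c ≤ i + 1 by omega) with rfl | hci
  · simp only [mk_mem_shiftedDiagram]
    omega
  · have : i + l i ≤ c + l c :=
      antitoneOn_add_self hstrict ⟨hc1, by omega⟩ ⟨by omega, by omega⟩ (by omega)
    simp only [mk_mem_shiftedDiagram]
    omega

theorem diag_mem_addableCells_iff (hpos : ∀ i, 1 ≤ i → i ≤ k → 0 < l i)
    (hstrict : ∀ i, 1 ≤ i → i < k → l (i + 1) < l i) :
    (k + 1, k + 1) ∈ addableCells (shiftedDiagram k l) ↔ ¬(1 ≤ k ∧ l k = 1) := by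
  rw [(octIdeal_shiftedDiagram hstrict).mem_addableCells_iff]
  constructor
  · rintro ⟨-, -, -, hbelow⟩ ⟨hk, hlk⟩
    have := hbelow (k, k + 1) hk (by omega) (by simp [Prod.lt_iff])
    simp only [mk_mem_shiftedDiagram] at this
    omega
  · intro hlast
    refine ⟨by simp, by simp, by simp, fun ⟨c, d⟩ hc1 hcd hlt => ?_⟩
    simp only [Prod.lt_iff] at hc1 hcd hlt
    have hck : c ≤ k := by omega
    have : k + l k ≤ c + l c := antitoneOn_add_self hstrict ⟨hc1, hck⟩ ⟨by omega, le_rfl⟩ hck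
    have := hpos k (by omega) le_rfl
    simp only [mk_mem_shiftedDiagram]
    omega

theorem addableCells_subset_insert_extensionCells (hpos : ∀ i, 1 ≤ i → i ≤ k → 0 < l i)
    (hstrict : ∀ i, 1 ≤ i → i < k → l (i + 1) < l i) :
    addableCells (shiftedDiagram k l) ⊆ insert (k + 1, k + 1) ↑(extensionCells k l) := by
  rintro ⟨a, b⟩ hq
  obtain ⟨hqD, ha1, hab, hbelow⟩ := (octIdeal_shiftedDiagram hstrict).mem_addableCells_iff.1 hq
  simp only [mk_mem_shiftedDiagram] at hqD ha1 hab
  have hbelow' : ∀ c d, 1 ≤ c → c ≤ d → (c < a ∧ d ≤ b ∨ c ≤ a ∧ d < b) →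
      c ≤ k ∧ d < c + l c := fun c d hc hcd hlt => by
    have := hbelow (c, d) hc hcd (Prod.lt_iff.2 hlt)
    simp only [mk_mem_shiftedDiagram] at this
    omega
  simp only [Set.mem_insert_iff, Prod.mk.injEq, Finset.coe_image, Set.mem_image, Finset.mem_coe,
    extensionCells, extendableRows, Finset.mem_filter, Finset.mem_range]
  rcases lt_trichotomy a (k + 1) with hak | rfl | hak
  · obtain ⟨i, rfl⟩ : ∃ i, a = i + 1 := ⟨a - 1, by omega⟩
    have := hpos (i + 1) ha1 (by omega)
    have hb : b = i + 1 + l (i + 1) := by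
      have := hbelow' (i + 1) (b - 1) ha1 (by omega) (by omega)
      omega
    refine Or.inr ⟨i, ⟨by omega, ?_⟩, rfl, hb.symm⟩
    rcases Nat.eq_zero_or_pos i with rfl | hi
    · exact Or.inl rfl
    · have := hbelow' i b hi (by omega) (by omega)
      omega
  · refine Or.inl ⟨rfl, ?_⟩
    by_contra hb
    have := hbelow' (k + 1) (b - 1) ha1 (by omega) (by omega)
    omega
  · have := hbelow' (a - 1) (a - 1) (by omega) le_rfl (by omega)
    omega

theorem addableCells_shiftedDiagram_of_lastPart_eq_one (hpos : ∀ i, 1 ≤ i → i ≤ k → 0 < l i)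
    (hstrict : ∀ i, 1 ≤ i → i < k → l (i + 1) < l i) (hlast : 1 ≤ k ∧ l k = 1) :
    addableCells (shiftedDiagram k l) = extensionCells k l := by
  refine (coe_extensionCells_subset_addableCells hstrict).antisymm' fun q hq => ?_
  rcases addableCells_subset_insert_extensionCells hpos hstrict hq with rfl | hq'
  · exact absurd hlast ((diag_mem_addableCells_iff hpos hstrict).1 hq)
  · exact hq'

theorem addableCells_shiftedDiagram_of_not_lastPart_eq_one
    (hpos : ∀ i, 1 ≤ i → i ≤ k → 0 < l i) (hstrict : ∀ i, 1 ≤ i → i < k → l (i + 1) < l i)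
    (hlast : ¬(1 ≤ k ∧ l k = 1)) :
    addableCells (shiftedDiagram k l) = insert (k + 1, k + 1) ↑(extensionCells k l) :=
  (addableCells_subset_insert_extensionCells hpos hstrict).antisymm <|
    Set.insert_subset ((diag_mem_addableCells_iff hpos hstrict).2 hlast)
      (coe_extensionCells_subset_addableCells hstrict)

theorem fst_ne_snd_of_mem_extensionCells (hpos : ∀ i, 1 ≤ i → i ≤ k → 0 < l i)
    {q : ℕ × ℕ} (hq : q ∈ extensionCells k l) : q.1 ≠ q.2 := by
  simp only [extensionCells, extendableRows, Finset.mem_image, Finset.mem_filter,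
    Finset.mem_range] at hq
  obtain ⟨i, ⟨hik, -⟩, rfl⟩ := hq
  have := hpos (i + 1) (by omega) (by omega)
  simp only
  omega

end ShiftedDiagram

/-- For the shifted diagram `D` of a strict partition `l₁ > ... > l_k > 0`:
if the last part is 1, then addable and removable cells are equinumerous, there
is a unique removable diagonal cell (of weight 1) and all other removable cells
and all addable cells are off-diagonal; otherwise (including the empty
partition) there is one more addable cell than removable cells and exactly one
addable cell is diagonal. -/
theorem stmt11 (k : ℕ) (l : ℕ → ℕ)
    (hpos : ∀ i, 1 ≤ i → i ≤ k → 0 < l i)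
    (hstrict : ∀ i, 1 ≤ i → i < k → l (i + 1) < l i) :
    let D : Set (ℕ × ℕ) := {p | 1 ≤ p.1 ∧ p.1 ≤ k ∧ p.1 ≤ p.2 ∧ p.2 < p.1 + l p.1}
    let Rem : Set (ℕ × ℕ) := {p | p ∈ D ∧ OctIdeal (D \ {p})}
    let Add : Set (ℕ × ℕ) := {q | q ∉ D ∧ OctIdeal (insert q D)}
    if 1 ≤ k ∧ l k = 1 then
      Add.ncard = Rem.ncard ∧
      (∃! p : ℕ × ℕ, p ∈ Rem ∧ p.1 = p.2) ∧
      (∀ q ∈ Add, q.1 ≠ q.2)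
    else
      Add.ncard = Rem.ncard + 1 ∧ (∃! q : ℕ × ℕ, q ∈ Add ∧ q.1 = q.2) := by
  intro D Rem Add
  have hcard : Rem.ncard = (extensionCells k l).card := by
    rw [show Rem = cornerCells k l from removableCells_shiftedDiagram hpos hstrict,
      Set.ncard_coe_finset, card_extensionCells]
  have hoff : ∀ q ∈ extensionCells k l, q.1 ≠ q.2 := fun _ =>
    fst_ne_snd_of_mem_extensionCells hpos
  split_ifs with hlast
  · have hAdd : Add = extensionCells k l :=
      addableCells_shiftedDiagram_of_lastPart_eq_one hpos hstrict hlast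
    refine ⟨by rw [hAdd, Set.ncard_coe_finset, hcard],
      existsUnique_diag_mem_removableCells hpos hstrict hlast, ?_⟩
    rw [hAdd]
    exact hoff
  · have hAdd : Add = insert (k + 1, k + 1) ↑(extensionCells k l) :=
      addableCells_shiftedDiagram_of_not_lastPart_eq_one hpos hstrict hlast
    have hdiag : (k + 1, k + 1) ∉ extensionCells k l := fun h => hoff _ h rfl
    refine ⟨by rw [hAdd, Set.ncard_insert_of_notMem (by exact_mod_cast hdiag),
      Set.ncard_coe_finset, hcard], ⟨(k + 1, k + 1), ⟨hAdd ▸ Set.mem_insert _ _, rfl⟩, ?_⟩⟩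
    rintro q ⟨hq, hqdiag⟩
    rw [hAdd] at hq
    exact hq.resolve_right fun h => hoff q h hqdiag
end
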